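/- arXiv:2509.25464 — 5 statements merged into one kernel-verified Lean document; each statement's English description precedes it below -/
import Mathlib

section
/- Let E be a directed graph and let λ = e₁⋯eₙ be the unique closed simple path based at a vertex v (i.e., s(e₁) = v = r(eₙ) and s(e_i) ≠ v for i = 2,…,n, and no other closed simple path is based at v). Then λ is a cycle: the vertices s(e₁), …, s(eₙ) are pairwise distinct. -/
/-- A path in a directed graph with edge set `E`, vertex set `V` and
source/range maps `s r : E → V` is a list of edges in which consecutive edges
are composable. -/
def IsGraphPath {V E : Type*} (s r : E → V) (es : List E) : Prop :=
  es.Chain' fun e f => r e = s f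

/-- A closed path based at `v`: a nonempty path starting and ending at `v`. -/
structure IsClosedPath {V E : Type*} (s r : E → V) (v : V) (es : List E) : Prop where
  ne : es ≠ []
  path : IsGraphPath s r es
  src : ∀ h : es ≠ [], s (es.head h) = v
  rng : ∀ h : es ≠ [], r (es.getLast h) = v

/-- A closed simple path based at `v`: a closed path `e₁⋯eₙ` based at `v` such
that `s eᵢ ≠ v` for `i = 2, …, n`. -/
def IsClosedSimplePath {V E : Type*} (s r : E → V) (v : V) (es : List E) : Prop :=
  IsClosedPath s r v es ∧ ∀ i (h : i < es.length), 0 < i → s es[i] ≠ v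

/-!
If two edges of `λ` had a common source `s eᵢ = s eⱼ` with `i < j`, then `i ≠ 0` since `λ` is
simple, and cutting out the loop `eᵢ ⋯ eⱼ₋₁` leaves a strictly shorter closed simple path based at
`v`, contradicting uniqueness.
-/

section

variable {V E : Type*} {s r : E → V} {v : V} {l : List E}

theorem IsGraphPath.take_append_drop (hl : IsGraphPath s r l) {i j : ℕ} (hi : i < l.length)
    (hj : j < l.length) (hs : s l[i] = s l[j]) : IsGraphPath s r (l.take i ++ l.drop j) := by
  refine List.isChain_append.mpr ⟨hl.take i, hl.drop j, ?_⟩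
  intro x hx y hy
  obtain ⟨k, rfl⟩ : ∃ k, i = k + 1 := by
    rcases i with _ | k
    · simp at hx
    · exact ⟨k, rfl⟩
  simp only [List.getLast?_take, List.head?_drop, Nat.add_eq_zero_iff, one_ne_zero, and_false,
    ↓reduceIte, add_tsub_cancel_right, List.getElem?_eq_getElem (Nat.lt_of_succ_lt hi),
    Option.some_or, Option.mem_def, Option.some.injEq, List.getElem?_eq_getElem hj] at hx hy
  subst hx hy
  rw [← hs]
  exact List.isChain_iff_getElem.mp hl k hi

theorem IsClosedSimplePath.take_append_drop (hl : IsClosedSimplePath s r v l) {i j : ℕ}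
    (hi : 0 < i) (hij : i ≤ j) (hj : j < l.length) (hs : s l[i] = s l[j]) :
    IsClosedSimplePath s r v (l.take i ++ l.drop j) := by
  have htake : l.take i ≠ [] := List.ne_nil_of_length_pos (by simp; omega)
  have hdrop : l.drop j ≠ [] := by simpa using hj
  have hne : l.take i ++ l.drop j ≠ [] := by simp [htake]
  refine ⟨⟨hne, hl.1.path.take_append_drop _ hj hs, fun _ => ?_, fun _ => ?_⟩, ?_⟩
  · rw [List.head_append_of_ne_nil htake, List.head_take]
    exact hl.1.src _
  · rw [List.getLast_append_of_ne_nil _ hdrop, List.getLast_drop]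
    exact hl.1.rng _
  · intro k hk hk0
    rw [List.getElem_append]
    split_ifs
    · rw [List.getElem_take]
      exact hl.2 k _ hk0
    · rw [List.getElem_drop]
      exact hl.2 _ _ (by omega)

theorem IsClosedSimplePath.exists_shorter_of_source_eq (hl : IsClosedSimplePath s r v l)
    {i j : ℕ} (hij : i < j) (hj : j < l.length) (hs : s l[i] = s l[j]) :
    ∃ m, IsClosedSimplePath s r v m ∧ m.length < l.length := by
  rcases Nat.eq_zero_or_pos i with rfl | hi
  · refine absurd ?_ (hl.2 j hj hij)
    rw [← hs, ← List.head_eq_getElem_zero hl.1.ne]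
    exact hl.1.src _
  · refine ⟨_, hl.take_append_drop hi hij.le hj hs, ?_⟩
    simp only [List.length_append, List.length_take, List.length_drop]
    omega

end

/-- If `l` is the unique closed simple path based at `v`, then `l`
is a cycle: its source vertices are pairwise distinct. -/
theorem unique_closed_simple_path_is_cycle
    {V E : Type*} (s r : E → V) (v : V) (l : List E)
    (hl : IsClosedSimplePath s r v l)
    (huniq : ∀ m : List E, IsClosedSimplePath s r v m → m = l) :
    ∀ i j (hi : i < l.length) (hj : j < l.length), s l[i] = s l[j] → i = j := by
  have not_shorter : ∀ m, IsClosedSimplePath s r v m → ¬ m.length < l.length :=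
    fun m hm hlt => hlt.ne (congrArg List.length (huniq m hm))
  intro i j hi hj hs
  rcases lt_trichotomy i j with hij | hij | hij
  · obtain ⟨m, hm, hlt⟩ := hl.exists_shorter_of_source_eq hij hj hs
    exact absurd hlt (not_shorter m hm)
  · exact hij
  · obtain ⟨m, hm, hlt⟩ := hl.exists_shorter_of_source_eq hij hi hs.symm
    exact absurd hlt (not_shorter m hm)
end

section
/- Let E be a directed graph and suppose there is exactly one closed simple path λ = e₁⋯eₙ based at a vertex v. Then for each i = 1,…,n, there is exactly one closed simple path based at s(e_i), namely the rotation λ_i = e_i⋯eₙe₁⋯e_{i−1}, and λ_i is a cycle. -/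
/-- A cycle based at `v`: a closed simple path all of whose source vertices are
pairwise distinct. -/
def IsCycle {V E : Type*} (s r : E → V) (v : V) (es : List E) : Prop :=
  IsClosedSimplePath s r v es ∧
    ∀ i j (hi : i < es.length) (hj : j < es.length), s es[i] = s es[j] → i = j

/-! Uniqueness of the closed simple path `l` at `v` has two consequences. First, the sources along
`l` are pairwise distinct: a repeated source would let one cut a loop out of `l`, leaving a shorter
closed simple path at `v`. Second, every closed walk at `v` is a power of `l`, since cutting it at
its returns to `v` splits it into closed simple paths at `v`. So the rotation `b ++ a` of
`l = a ++ b` is a closed walk with distinct sources, i.e. a cycle. If `m` is a closed simple path at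
the source of the first edge of `b`, splicing it in gives a closed walk `a ++ m ++ b` at `v`, hence a power of `l`;
then `m` is a power of `b ++ a`, and simplicity of `m` leaves only `b ++ a` itself. -/

theorem List.flatten_replicate_succ_append_comm {α : Type*} (a b : List α) (k : ℕ) :
    (List.replicate (k + 1) (a ++ b)).flatten = a ++ (List.replicate k (b ++ a)).flatten ++ b := by
  induction k with
  | zero => simp
  | succ k ih => rw [List.replicate_succ, List.flatten_cons, ih]; simp [List.replicate_succ]

inductive IsWalk {V E : Type*} (s r : E → V) : V → V → List E → Prop
  | nil (u : V) : IsWalk s r u u []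
  | cons {e : E} {w : V} {p : List E} : IsWalk s r (r e) w p → IsWalk s r (s e) w (e :: p)

section Walks

variable {V E : Type*} {s r : E → V} {u v w x : V} {a b p q : List E}

@[simp]
theorem isWalk_nil : IsWalk s r u w [] ↔ u = w :=
  ⟨fun h => by cases h; rfl, fun h => h ▸ .nil u⟩

@[simp]
theorem isWalk_cons {e : E} : IsWalk s r u w (e :: p) ↔ s e = u ∧ IsWalk s r (r e) w p :=
  ⟨fun h => by cases h with | cons h => exact ⟨rfl, h⟩, fun ⟨he, h⟩ => he ▸ h.cons⟩

theorem isWalk_append : IsWalk s r u x (p ++ q) ↔ ∃ w, IsWalk s r u w p ∧ IsWalk s r w x q := by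
  induction p generalizing u with
  | nil => simp
  | cons e p ih => simp [ih, and_assoc]

theorem IsWalk.append (hp : IsWalk s r u w p) (hq : IsWalk s r w x q) :
    IsWalk s r u x (p ++ q) :=
  isWalk_append.2 ⟨w, hp, hq⟩

theorem isWalk_append_of_ne_nil (hb : b ≠ []) :
    IsWalk s r u x (a ++ b) ↔ IsWalk s r u (s (b.head hb)) a ∧ IsWalk s r (s (b.head hb)) x b := by
  refine ⟨fun h => ?_, fun ⟨ha, hb'⟩ => ha.append hb'⟩
  obtain ⟨w, ha, hb'⟩ := isWalk_append.1 h
  obtain ⟨f, t, rfl⟩ := List.exists_cons_of_ne_nil hb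
  obtain ⟨rfl, -⟩ := isWalk_cons.1 hb'
  exact ⟨ha, hb'⟩

theorem isGraphPath_singleton {e : E} : IsGraphPath s r [e] :=
  List.isChain_singleton e

theorem isGraphPath_cons_cons {e f : E} :
    IsGraphPath s r (e :: f :: p) ↔ r e = s f ∧ IsGraphPath s r (f :: p) :=
  List.isChain_cons_cons

theorem isWalk_iff_isGraphPath (hp : p ≠ []) :
    IsWalk s r u w p ↔ IsGraphPath s r p ∧ s (p.head hp) = u ∧ r (p.getLast hp) = w := by
  induction p generalizing u with
  | nil => contradiction
  | cons e t ih =>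
    rcases t with _ | ⟨f, t⟩
    · simp [isGraphPath_singleton]
    · simp only [isWalk_cons, ih (List.cons_ne_nil f t), isGraphPath_cons_cons, List.head_cons,
        List.getLast_cons_cons]
      grind

theorem isClosedPath_iff : IsClosedPath s r v p ↔ p ≠ [] ∧ IsWalk s r v v p := by
  refine ⟨fun ⟨hne, hpath, hsrc, hrng⟩ =>
    ⟨hne, (isWalk_iff_isGraphPath hne).2 ⟨hpath, hsrc hne, hrng hne⟩⟩, fun ⟨hne, hp⟩ => ?_⟩
  obtain ⟨hpath, hsrc, hrng⟩ := (isWalk_iff_isGraphPath hne).1 hp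
  exact ⟨hne, hpath, fun _ => hsrc, fun _ => hrng⟩

theorem isClosedSimplePath_iff :
    IsClosedSimplePath s r v p ↔ p ≠ [] ∧ IsWalk s r v v p ∧ ∀ e ∈ p.tail, s e ≠ v := by
  rw [IsClosedSimplePath, isClosedPath_iff, and_assoc]
  refine and_congr_right fun _ => and_congr_right fun _ => ?_
  rcases p with _ | ⟨e, t⟩
  · simp
  · simp only [List.tail_cons, List.forall_mem_iff_getElem]
    refine ⟨fun h i hi => h (i + 1) (by simpa) (by omega), fun h i hi hi0 => ?_⟩
    obtain ⟨j, rfl⟩ := Nat.exists_eq_add_of_lt hi0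
    simpa using h j (by simp at hi; omega)

theorem isCycle_iff : IsCycle s r v p ↔ IsClosedSimplePath s r v p ∧ (p.map s).Nodup := by
  refine and_congr_right fun _ => ⟨fun h => List.nodup_iff_injective_getElem.2 ?_,
    fun h i j hi hj hij => (h.getElem_inj_iff (hi := by simpa) (hj := by simpa)).1 (by simpa)⟩
  rintro ⟨i, hi⟩ ⟨j, hj⟩ hij
  exact Fin.ext (h i j (by simpa using hi) (by simpa using hj) (by simpa using hij))

theorem IsWalk.exists_eq_isClosedSimplePath_append (hp : IsWalk s r v v p) (hne : p ≠ []) :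
    ∃ p₁ p₂, p = p₁ ++ p₂ ∧ IsClosedSimplePath s r v p₁ ∧ IsWalk s r v v p₂ := by
  classical
  obtain ⟨e, t, rfl⟩ := List.exists_cons_of_ne_nil hne
  set away : E → Bool := fun x => decide (s x ≠ v)
  refine ⟨e :: t.takeWhile away, t.dropWhile away, by simp, ?_⟩
  rw [← List.takeWhile_append_dropWhile (p := away) (l := t), ← List.cons_append,
    isWalk_append] at hp
  obtain ⟨u, h₁, h₂⟩ := hp
  obtain rfl : u = v := by
    rcases hd : t.dropWhile away with _ | ⟨f, t'⟩
    · simpa [hd] using h₂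
    · have hf := List.head_dropWhile_not away (l := t) (by simp [hd])
      simp only [hd, List.head_cons, away, decide_eq_false_iff_not, not_not] at hf
      rw [hd, isWalk_cons] at h₂
      exact h₂.1.symm.trans hf
  refine ⟨isClosedSimplePath_iff.2 ⟨List.cons_ne_nil _ _, h₁, fun x hx => ?_⟩, h₂⟩
  simpa [away] using List.mem_takeWhile_imp hx

end Walks

section UniqueClosedSimplePath

variable {V E : Type*} {s r : E → V} {v : V} {a b l : List E}

theorem eq_flatten_replicate_of_isWalk
    (huniq : ∀ m : List E, IsClosedSimplePath s r v m → m = l) {p : List E}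
    (hp : IsWalk s r v v p) : ∃ k, p = (List.replicate k l).flatten := by
  induction h : p.length using Nat.strong_induction_on generalizing p with
  | _ n ih =>
    rcases eq_or_ne p [] with rfl | hne
    · exact ⟨0, rfl⟩
    obtain ⟨p₁, p₂, rfl, h₁, h₂⟩ := hp.exists_eq_isClosedSimplePath_append hne
    have hp₁ : 0 < p₁.length := List.length_pos_iff.2 (isClosedSimplePath_iff.1 h₁).1
    obtain ⟨k, rfl⟩ := ih p₂.length (by simp [← h]; omega) h₂ rfl
    exact ⟨k + 1, by rw [huniq p₁ h₁, List.replicate_succ, List.flatten_cons]⟩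

theorem nodup_map_source (hl : IsClosedSimplePath s r v l)
    (huniq : ∀ m : List E, IsClosedSimplePath s r v m → m = l) : (l.map s).Nodup := by
  rw [List.Nodup, List.pairwise_map, List.pairwise_iff_forall_sublist]
  intro x y hxy hs
  obtain ⟨l₁, l₂, rfl, hx, hy⟩ := List.cons_sublist_iff.1 hxy
  obtain ⟨a, q, rfl⟩ := List.append_of_mem hx
  obtain ⟨c, b, rfl⟩ := List.append_of_mem (List.singleton_sublist.1 hy)
  obtain ⟨-, hwalk, htail⟩ := isClosedSimplePath_iff.1 hl
  rw [show a ++ x :: q ++ (c ++ y :: b) = a ++ x :: (q ++ c) ++ y :: b by simp] at hwalk htail huniq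
  obtain ⟨hax, hyv⟩ := (isWalk_append_of_ne_nil (List.cons_ne_nil y b)).1 hwalk
  obtain ⟨ha, -⟩ := (isWalk_append_of_ne_nil (List.cons_ne_nil x (q ++ c))).1 hax
  simp only [List.head_cons] at ha hyv
  -- `x :: (q ++ c)` is a loop at `s x = s y`: cutting it out leaves a shorter closed simple path
  -- at `v`, unless `a = []`, in which case `y` already returns to `v`.
  rcases a with _ | ⟨a₀, a⟩
  · exact htail y (by simp) (hs.symm.trans (isWalk_nil.1 ha).symm)
  · have hshort : IsClosedSimplePath s r v (a₀ :: a ++ y :: b) :=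
      isClosedSimplePath_iff.2 ⟨by simp, ha.append (hs ▸ hyv),
        fun e he => htail e (by simp at he ⊢; tauto)⟩
    have := congrArg List.length (huniq _ hshort)
    simp at this
    omega

theorem isCycle_append_comm (hl : IsClosedSimplePath s r v (a ++ b))
    (huniq : ∀ m : List E, IsClosedSimplePath s r v m → m = a ++ b) (hb : b ≠ []) :
    IsCycle s r (s (b.head hb)) (b ++ a) := by
  have hnd : ((b ++ a).map s).Nodup := by
    simpa only [List.map_append] using
      (List.perm_append_comm.nodup_iff.1 (List.map_append ▸ nodup_map_source hl huniq))
  obtain ⟨-, hwalk, -⟩ := isClosedSimplePath_iff.1 hl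
  obtain ⟨ha, hb'⟩ := (isWalk_append_of_ne_nil hb).1 hwalk
  refine isCycle_iff.2 ⟨isClosedSimplePath_iff.2 ⟨by simp [hb], hb'.append ha, ?_⟩, hnd⟩
  obtain ⟨f, t, rfl⟩ := List.exists_cons_of_ne_nil hb
  simp only [List.cons_append, List.map_cons, List.nodup_cons, List.mem_map] at hnd
  exact fun e he hef => hnd.1 ⟨e, he, hef⟩

theorem eq_append_comm_of_isClosedSimplePath (hl : IsClosedSimplePath s r v (a ++ b))
    (huniq : ∀ m : List E, IsClosedSimplePath s r v m → m = a ++ b) (hb : b ≠ []) {m : List E}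
    (hm : IsClosedSimplePath s r (s (b.head hb)) m) : m = b ++ a := by
  obtain ⟨hmne, hmwalk, hmtail⟩ := isClosedSimplePath_iff.1 hm
  obtain ⟨-, hwalk, -⟩ := isClosedSimplePath_iff.1 hl
  obtain ⟨ha, hb'⟩ := (isWalk_append_of_ne_nil hb).1 hwalk
  obtain ⟨k, hk⟩ := eq_flatten_replicate_of_isWalk huniq ((ha.append hmwalk).append hb')
  obtain _ | k := k
  · simp [hmne] at hk
  rw [List.flatten_replicate_succ_append_comm, List.append_cancel_right_eq,
    List.append_cancel_left_eq] at hk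
  obtain _ | _ | k := k
  · simp [hmne] at hk
  · simpa using hk
  · -- the second copy of `b ++ a` in `m` starts at the base point of `m`
    obtain ⟨f, t, rfl⟩ := List.exists_cons_of_ne_nil hb
    exact absurd rfl (hmtail f (by simp [hk, List.replicate_succ]))

end UniqueClosedSimplePath

/-- If `l = e₁⋯eₙ` is the unique closed simple path based at `v`,
then for each `i` the rotation `e_{i+1}⋯eₙe₁⋯e_i` (here `l.drop i ++ l.take i`,
indexing from `0`) is a cycle, and it is the unique closed simple path based at
its base vertex `s e_{i+1}`. -/
theorem rotation_of_unique_closed_simple_path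
    {V E : Type*} (s r : E → V) (v : V) (l : List E)
    (hl : IsClosedSimplePath s r v l)
    (huniq : ∀ m : List E, IsClosedSimplePath s r v m → m = l) :
    ∀ i (hi : i < l.length),
      IsCycle s r (s l[i]) (l.drop i ++ l.take i) ∧
      ∀ m : List E, IsClosedSimplePath s r (s l[i]) m → m = l.drop i ++ l.take i := by
  intro i hi
  have hb : l.drop i ≠ [] := by simpa using hi
  rw [← List.head_drop hb]
  rw [← List.take_append_drop i l] at hl huniq
  exact ⟨isCycle_append_comm hl huniq hb, fun m => eq_append_comm_of_isClosedSimplePath hl huniq hb⟩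
end

section
/- For any positive integer k, setting n = ⌈k/2⌉, the number of directed multigraphs on two vertices with exactly k edges, up to graph isomorphism, equals n(n+1)(3k−4n+1)/3 + (n+1)·⌈(k+1)/2⌉. -/
/-!
Swapping the two vertices is an involution `σ` on the `(k + 3).choose 3` labelled tuples, and the
graphs up to isomorphism are its orbits. Each orbit has two elements unless it is a fixed point
of `σ`, so twice the number of orbits is the number of tuples plus the number of fixed points.
A fixed point has the shape `(a, a, c, c)`, so there are `k / 2 + 1` of them when `k` is even and
none when `k` is odd; the closed formula follows by splitting on the parity of `k`.
-/

/-- A directed multigraph on two vertices `u, v` with `k` edges is recorded, up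
to a choice of labelling of the two vertices, by a tuple `(a, b, c, d)` with
`a + b + c + d = k`: `a` loops at `u`, `b` loops at `v`, `c` edges from `u` to
`v` and `d` edges from `v` to `u`. -/
def TwoVertexGraph (k : ℕ) : Type :=
  {t : ℕ × ℕ × ℕ × ℕ // t.1 + t.2.1 + t.2.2.1 + t.2.2.2 = k}

/-- Two tuples describe isomorphic graphs iff they are equal or related by
swapping the two vertices. -/
def graphIso {k : ℕ} (t t' : TwoVertexGraph k) : Prop :=
  t'.val = t.val ∨ t'.val = (t.val.2.1, t.val.1, t.val.2.2.2, t.val.2.2.1)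

open Finset Function

theorem Function.Involutive.equivalence_eq_or_eq {α : Type*} {σ : α → α} (hσ : Involutive σ) :
    Equivalence fun x y : α => y = x ∨ y = σ x where
  refl _ := Or.inl rfl
  symm := by rintro x y (rfl | rfl) <;> simp [hσ _]
  trans := by rintro x y z (rfl | rfl) (rfl | rfl) <;> simp [hσ _]

theorem Function.Involutive.two_mul_card_quot {α : Type*} [Finite α] {σ : α → α}
    {r : α → α → Prop} (hσ : Involutive σ) (hr : ∀ x y, r x y ↔ y = x ∨ y = σ x) :
    2 * Nat.card (Quot r) = Nat.card α + Nat.card (fixedPoints σ) := by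
  classical
  obtain rfl : r = fun x y => y = x ∨ y = σ x := by ext x y; exact hr x y
  have := Fintype.ofFinite α
  have := Fintype.ofFinite (Quot fun x y : α => y = x ∨ y = σ x)
  set π : α → Quot _ := Quot.mk fun x y => y = x ∨ y = σ x
  have hfiber (x : α) : ({y | π y = π x} : Finset α) = {x, σ x} := by
    ext y
    rw [mem_filter, hσ.equivalence_eq_or_eq.quot_mk_eq_iff, mem_insert, mem_singleton]
    simp only [mem_univ, true_and]
    exact or_congr eq_comm ⟨fun h => h ▸ (hσ y).symm, fun h => h ▸ (hσ x).symm⟩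
  have hpair (x : α) : #({x, σ x} : Finset α) + #({y ∈ {x, σ x} | IsFixedPt σ y}) = 2 := by
    by_cases hx : σ x = x
    · simp [hx, IsFixedPt, filter_singleton]
    · rw [card_pair (Ne.symm hx), filter_false_of_mem]
      · rfl
      · simp only [mem_insert, mem_singleton, IsFixedPt, forall_eq_or_imp, hx, hσ x, forall_eq,
          not_false_eq_true, true_and]
        exact fun h => hx h.symm
  calc 2 * Nat.card (Quot _)
      = ∑ q, (#{y ∈ univ | π y = q} + #{y ∈ {y | IsFixedPt σ y} | π y = q}) := by
        rw [Nat.card_eq_fintype_card, ← card_univ, mul_comm, ← smul_eq_mul, ← sum_const]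
        refine sum_congr rfl fun q _ => ?_
        obtain ⟨x, rfl⟩ := Quot.exists_rep q
        rw [filter_comm, hfiber, hpair]
    _ = Nat.card α + Nat.card (fixedPoints σ) := by
        rw [sum_add_distrib, ← card_eq_sum_card_fiberwise (f := π) (fun _ _ => mem_univ _),
          ← card_eq_sum_card_fiberwise (f := π) (fun _ _ => mem_univ _), Nat.card_eq_fintype_card,
          ← card_univ, Nat.card_eq_fintype_card, Fintype.card_subtype]
        rfl

theorem Finset.Nat.card_antidiagonalTuple (n k : ℕ) :
    #(Finset.Nat.antidiagonalTuple n k) = (n + k - 1).choose k := by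
  rw [← piAntidiag_univ_fin_eq_antidiagonalTuple, ← map_sym_eq_piAntidiag, card_map, sym_univ,
    card_univ, Sym.card_sym_eq_choose, Fintype.card_fin]

theorem Nat.add_three_choose_three_mul_six (k : ℕ) :
    (k + 3).choose 3 * 6 = (k + 1) * (k + 2) * (k + 3) := by
  rw [mul_comm, show 6 = Nat.factorial 3 from rfl, ← Nat.descFactorial_eq_factorial_mul_choose]
  simp only [Nat.descFactorial_succ, Nat.reduceSubDiff, Nat.add_one_sub_one, tsub_zero,
    Nat.descFactorial_zero, mul_one]
  ring

theorem Int.ceil_natCast_div_two (k : ℕ) : ⌈(k : ℚ) / 2⌉ = ((k + 1) / 2 : ℕ) := by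
  obtain ⟨m, rfl | rfl⟩ := Nat.even_or_odd' k
  · rw [show (2 * m + 1) / 2 = m by omega]
    push_cast
    rw [mul_div_cancel_left₀ _ two_ne_zero, Int.ceil_natCast]
  · rw [show (2 * m + 1 + 1) / 2 = m + 1 by omega, Int.ceil_eq_iff]
    push_cast
    constructor <;> linarith

namespace TwoVertexGraph

variable {k : ℕ}

theorem val_inj {t t' : TwoVertexGraph k} : t.1 = t'.1 ↔ t = t' := Subtype.val_inj

def swap (t : TwoVertexGraph k) : TwoVertexGraph k :=
  ⟨(t.1.2.1, t.1.1, t.1.2.2.2, t.1.2.2.1), by have := t.2; dsimp only at this ⊢; omega⟩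

theorem swap_involutive : Involutive (swap (k := k)) := fun _ => rfl

theorem graphIso_iff (t t' : TwoVertexGraph k) : graphIso t t' ↔ t' = t ∨ t' = swap t :=
  or_congr val_inj (val_inj (t' := swap t))

theorem isFixedPt_swap_iff (t : TwoVertexGraph k) :
    IsFixedPt swap t ↔ t.1.2.1 = t.1.1 ∧ t.1.2.2.2 = t.1.2.2.1 := by
  rw [IsFixedPt, ← val_inj]
  simp only [swap, Prod.ext_iff]
  grind

def equivAntidiagonalTuple (k : ℕ) : TwoVertexGraph k ≃ Finset.Nat.antidiagonalTuple 4 k where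
  toFun t := ⟨![t.1.1, t.1.2.1, t.1.2.2.1, t.1.2.2.2], by
    simp [Finset.Nat.mem_antidiagonalTuple, Fin.sum_univ_four, ← t.2, add_assoc]⟩
  invFun f := ⟨(f.1 0, f.1 1, f.1 2, f.1 3), by
    simpa [Fin.sum_univ_four, add_assoc] using Finset.Nat.mem_antidiagonalTuple.1 f.2⟩
  left_inv _ := rfl
  right_inv f := by ext i; fin_cases i <;> rfl

instance : Finite (TwoVertexGraph k) := .of_equiv _ (equivAntidiagonalTuple k).symm

theorem card_eq_choose (k : ℕ) : Nat.card (TwoVertexGraph k) = (k + 3).choose 3 := by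
  rw [Nat.card_congr (equivAntidiagonalTuple k), Nat.card_eq_finsetCard,
    Finset.Nat.card_antidiagonalTuple, show 4 + k - 1 = k + 3 by omega, Nat.choose_symm_add]

def fixedPointsSwapEquiv (m : ℕ) :
    fixedPoints (swap (k := 2 * m)) ≃ antidiagonal m where
  toFun t := ⟨(t.1.1.1, t.1.1.2.2.1), by
    have := t.1.2
    have := (isFixedPt_swap_iff t.1).1 t.2
    rw [HasAntidiagonal.mem_antidiagonal]
    omega⟩
  invFun p := ⟨⟨(p.1.1, p.1.1, p.1.2, p.1.2), by
    have := HasAntidiagonal.mem_antidiagonal.1 p.2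
    dsimp only
    omega⟩, rfl⟩
  left_inv := by
    rintro ⟨⟨⟨a, b, c, d⟩, h⟩, hfix⟩
    obtain ⟨hb, hd⟩ := (isFixedPt_swap_iff _).1 hfix
    dsimp only at hb hd
    subst hb hd
    rfl
  right_inv _ := rfl

theorem card_fixedPoints_swap_two_mul (m : ℕ) :
    Nat.card (fixedPoints (swap (k := 2 * m))) = m + 1 := by
  rw [Nat.card_congr (fixedPointsSwapEquiv m), Nat.card_eq_finsetCard,
    Finset.Nat.card_antidiagonal]

theorem card_fixedPoints_swap_two_mul_add_one (m : ℕ) :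
    Nat.card (fixedPoints (swap (k := 2 * m + 1))) = 0 := by
  refine Nat.card_eq_zero.2 (Or.inl ⟨fun t => ?_⟩)
  have := t.1.2
  have := (isFixedPt_swap_iff t.1).1 t.2
  omega

end TwoVertexGraph

theorem card_two_vertex_graphs_general
    (k : ℕ) (n : ℤ) (hn : n = ⌈(k : ℚ) / 2⌉) :
    (Nat.card (Quot (graphIso (k := k))) : ℚ) =
      (n * (n + 1) * (3 * k - 4 * n + 1) : ℚ) / 3 +
        (n + 1) * (⌈((k : ℚ) + 1) / 2⌉ : ℤ) := by
  have horbits :=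
    TwoVertexGraph.swap_involutive.two_mul_card_quot (TwoVertexGraph.graphIso_iff (k := k))
  have hchoose := Nat.add_three_choose_three_mul_six k
  rw [TwoVertexGraph.card_eq_choose] at horbits
  have hceil : ⌈((k : ℚ) + 1) / 2⌉ = ((k + 2) / 2 : ℕ) := by
    exact_mod_cast Int.ceil_natCast_div_two (k + 1)
  rw [hceil, hn, Int.ceil_natCast_div_two]
  obtain ⟨m, rfl | rfl⟩ := Nat.even_or_odd' k
  · rw [TwoVertexGraph.card_fixedPoints_swap_two_mul] at horbits
    rw [show (2 * m + 1) / 2 = m by omega, show (2 * m + 2) / 2 = m + 1 by omega]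
    qify at horbits hchoose
    push_cast
    linear_combination horbits / 2 + hchoose / 12
  · rw [TwoVertexGraph.card_fixedPoints_swap_two_mul_add_one] at horbits
    rw [show (2 * m + 1 + 1) / 2 = m + 1 by omega, show (2 * m + 1 + 2) / 2 = m + 1 by omega]
    qify at horbits hchoose
    push_cast
    linear_combination horbits / 2 + hchoose / 12

/-- For any positive integer `k`, with `n = ⌈k/2⌉`, the number of
directed multigraphs on two vertices with exactly `k` edges, up to isomorphism,
is `n(n+1)(3k−4n+1)/3 + (n+1)·⌈(k+1)/2⌉`. -/
theorem card_two_vertex_graphs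
    (k : ℕ) (hk : 0 < k) (n : ℤ) (hn : n = ⌈(k : ℚ) / 2⌉) :
    (Nat.card (Quot (graphIso (k := k))) : ℚ) =
      (n * (n + 1) * (3 * k - 4 * n + 1) : ℚ) / 3 +
        (n + 1) * (⌈((k : ℚ) + 1) / 2⌉ : ℤ) :=
  card_two_vertex_graphs_general k n hn
end

section
/- Let E be a directed graph and let I be a two-sided ideal of the Leavitt path algebra L_K(E). Then the set I ∩ E⁰ of vertices contained in I is hereditary: if v ∈ I ∩ E⁰ and there is a path μ with s(μ) = v and r(μ) = w, then w ∈ I ∩ E⁰. -/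
/-- Generators of a Leavitt path algebra: vertices, edges, and ghost edges. -/
inductive LPAGen (V E : Type) : Type
  | vert : V → LPAGen V E
  | edge : E → LPAGen V E
  | ghost : E → LPAGen V E

open FreeAlgebra LPAGen in
/-- The defining relations of the Leavitt path algebra of a finite directed
graph with vertex set `V`, edge set `E` and source/range maps `s r : E → V`:
(V) `v w = δ_{v,w} v`, (E1) `s(e) e = e r(e) = e`, (E2) `r(e) e* = e* s(e) = e*`,
(CK1) `e* f = δ_{e,f} r(e)`, (CK2) `v = ∑_{s(e)=v} e e*` for `v` emitting an
edge, together with `1 = ∑_{v ∈ E⁰} v` (the graph is finite). -/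
inductive LPARel (K V E : Type) [Field K] [Fintype V] [Fintype E] [DecidableEq V]
    [DecidableEq E] (s r : E → V) :
    FreeAlgebra K (LPAGen V E) → FreeAlgebra K (LPAGen V E) → Prop
  | vertMul (v w : V) : LPARel K V E s r (ι K (vert v : LPAGen V E) * ι K (vert w : LPAGen V E))
      (if v = w then ι K (vert v : LPAGen V E) else 0)
  | edgeSrc (e : E) : LPARel K V E s r (ι K (vert (s e) : LPAGen V E) * ι K (edge e : LPAGen V E))
      (ι K (edge e : LPAGen V E))
  | edgeRng (e : E) : LPARel K V E s r (ι K (edge e : LPAGen V E) * ι K (vert (r e) : LPAGen V E))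
      (ι K (edge e : LPAGen V E))
  | ghostRng (e : E) : LPARel K V E s r (ι K (vert (r e) : LPAGen V E) * ι K (ghost e : LPAGen V E))
      (ι K (ghost e : LPAGen V E))
  | ghostSrc (e : E) : LPARel K V E s r (ι K (ghost e : LPAGen V E) * ι K (vert (s e) : LPAGen V E))
      (ι K (ghost e : LPAGen V E))
  | ck1 (e f : E) : LPARel K V E s r (ι K (ghost e : LPAGen V E) * ι K (edge f : LPAGen V E))
      (if e = f then ι K (vert (r e) : LPAGen V E) else 0)
  | ck2 (v : V) (h : ∃ e, s e = v) : LPARel K V E s r (ι K (vert v : LPAGen V E))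
      (∑ e ∈ Finset.univ.filter fun e => s e = v,
        ι K (edge e : LPAGen V E) * ι K (ghost e : LPAGen V E))
  | unit : LPARel K V E s r 1 (∑ v : V, ι K (vert v : LPAGen V E))

/-- The Leavitt path algebra of a finite directed graph, as a quotient of the
free algebra on vertices, edges, and ghost edges by the Leavitt path relations. -/
def LeavittPathAlgebra (K V E : Type) [Field K] [Fintype V] [Fintype E] [DecidableEq V]
    [DecidableEq E] (s r : E → V) : Type :=
  RingQuot (LPARel K V E s r)

variable (K V E : Type) [Field K] [Fintype V] [Fintype E] [DecidableEq V] [DecidableEq E]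
  (s r : E → V)

noncomputable instance : Ring (LeavittPathAlgebra K V E s r) :=
  inferInstanceAs (Ring (RingQuot (LPARel K V E s r)))

noncomputable instance : Algebra K (LeavittPathAlgebra K V E s r) :=
  inferInstanceAs (Algebra K (RingQuot (LPARel K V E s r)))

/-- The image of a vertex in the Leavitt path algebra. -/
noncomputable def LPAvert (v : V) : LeavittPathAlgebra K V E s r :=
  RingQuot.mkAlgHom K (LPARel K V E s r) (FreeAlgebra.ι K (LPAGen.vert v))

/-- The image of an edge in the Leavitt path algebra. -/
noncomputable def LPAedge (e : E) : LeavittPathAlgebra K V E s r :=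
  RingQuot.mkAlgHom K (LPARel K V E s r) (FreeAlgebra.ι K (LPAGen.edge e))

/-- The image of a ghost edge in the Leavitt path algebra. -/
noncomputable def LPAghost (e : E) : LeavittPathAlgebra K V E s r :=
  RingQuot.mkAlgHom K (LPARel K V E s r) (FreeAlgebra.ι K (LPAGen.ghost e))

lemma LPA_edge_step (I : TwoSidedIdeal (LeavittPathAlgebra K V E s r)) (e : E)
    (h : LPAvert K V E s r (s e) ∈ I) : LPAvert K V E s r (r e) ∈ I := by
  have h1 : LPAghost K V E s r e * LPAvert K V E s r (s e) = LPAghost K V E s r e := by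
    rw [LPAghost, LPAvert]
    exact (map_mul (RingQuot.mkAlgHom K (LPARel K V E s r)) _ _).symm.trans
      (RingQuot.mkAlgHom_rel K (LPARel.ghostSrc e))
  have h2 : LPAghost K V E s r e * LPAedge K V E s r e = LPAvert K V E s r (r e) := by
    rw [LPAghost, LPAedge, LPAvert]
    have h3 := RingQuot.mkAlgHom_rel K (LPARel.ck1 (K := K) (s := s) (r := r) e e)
    rw [if_pos rfl] at h3
    exact (map_mul (RingQuot.mkAlgHom K (LPARel K V E s r)) _ _).symm.trans h3
  have : LPAvert K V E s r (r e) =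
      LPAghost K V E s r e * LPAvert K V E s r (s e) * LPAedge K V E s r e := by
    rw [h1, h2]
  rw [this]
  exact I.mul_mem_right _ _ (I.mul_mem_left _ _ h)

/-- For any two-sided ideal `I` of the Leavitt path algebra of a
finite directed graph, the set of vertices lying in `I` is hereditary: if the
vertex `v` lies in `I` and there is a path `es` from `v` to `w`, then `w` lies
in `I`. (A path of length zero from `v` to `w` means `v = w`.) -/
theorem vertices_in_ideal_hereditary
    (I : TwoSidedIdeal (LeavittPathAlgebra K V E s r))
    (v w : V) (hv : LPAvert K V E s r v ∈ I)
    (es : List E) (hchain : es.Chain' fun e f => r e = s f)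
    (hsrc : ∀ h : es ≠ [], s (es.head h) = v)
    (hrng : ∀ h : es ≠ [], r (es.getLast h) = w)
    (hnil : es = [] → v = w) :
    LPAvert K V E s r w ∈ I := by
  induction es generalizing v with
  | nil => rwa [hnil rfl] at hv
  | cons e es ih =>
    have hse : s e = v := hsrc (by simp)
    have hre : LPAvert K V E s r (r e) ∈ I := by
      rw [← hse] at hv; exact LPA_edge_step K V E s r I e hv
    rcases es with _ | ⟨f, es'⟩
    · have : r e = w := hrng (by simp)
      rwa [this] at hre
    · exact ih _ hre hchain.tail
        (fun h => ((List.isChain_cons_cons.mp hchain).1).symm)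
        (fun h => by
          have := hrng (by simp)
          rwa [List.getLast_cons (by simp)] at this)
        (fun h => by simp at h)
end

section
/- Let E be a directed graph in which every vertex v with at least one closed simple path based at it has at least two closed simple paths based at it (Condition (K)). Suppose c = e₁⋯eₙ is a cycle in E. Then c has an exit: there exists an index i and an edge f ≠ e_i with s(f) = s(e_i). -/
/-- Condition (K): every vertex has either zero or at least two closed simple
paths based at it. -/
def ConditionK {V E : Type*} (s r : E → V) : Prop :=
  ∀ v : V, (∃ m : List E, IsClosedSimplePath s r v m) →
    ∃ m₁ m₂ : List E, IsClosedSimplePath s r v m₁ ∧ IsClosedSimplePath s r v m₂ ∧ m₁ ≠ m₂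

/-- In a graph satisfying Condition (K), every cycle
`c = e₁⋯eₙ` (a closed simple path with pairwise distinct source vertices) has
an exit: an edge `f ≠ eᵢ` with `s f = s eᵢ` for some `i`. -/
theorem conditionK_cycle_has_exit
    {V E : Type*} (s r : E → V) (hK : ConditionK s r)
    (v : V) (es : List E) (hc : IsClosedSimplePath s r v es)
    (hnodup : ∀ i j (hi : i < es.length) (hj : j < es.length), s es[i] = s es[j] → i = j) :
    ∃ (i : ℕ) (hi : i < es.length) (f : E), f ≠ es[i] ∧ s f = s es[i] := by
  classical
  obtain ⟨m₁, m₂, h₁, h₂, hne⟩ := hK v ⟨es, hc⟩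
  obtain ⟨m, hm, hmes⟩ : ∃ m, IsClosedSimplePath s r v m ∧ m ≠ es := by
    by_cases h : m₁ = es
    · exact ⟨m₂, h₂, by rintro rfl; exact hne h⟩
    · exact ⟨m₁, h₁, h⟩
  have hmne : m ≠ [] := hm.1.ne
  have hesne : es ≠ [] := hc.1.ne
  have chm : ∀ i (h : i + 1 < m.length), r m[i] = s m[i+1] := by
    intro i h
    exact List.isChain_iff_getElem.mp hm.1.path i (by omega)
  have ches : ∀ i (h : i + 1 < es.length), r es[i] = s es[i+1] := by
    intro i h
    exact List.isChain_iff_getElem.mp hc.1.path i (by omega)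
  have hex : ∃ k, ¬ ∃ (h1 : k < m.length) (h2 : k < es.length), m[k] = es[k] := by
    refine ⟨m.length, ?_⟩
    rintro ⟨h1, -⟩; omega
  have hspec := Nat.find_spec hex
  have hmin : ∀ j, j < Nat.find hex →
      ∃ (h1 : j < m.length) (h2 : j < es.length), m[j] = es[j] :=
    fun j hj => not_not.mp (Nat.find_min hex hj)
  generalize hg : Nat.find hex = k at hspec hmin
  have hklem : k ≤ m.length := by
    by_contra h
    obtain ⟨h1, -⟩ := hmin m.length (by omega)
    omega
  have hkles : k ≤ es.length := by
    by_contra h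
    obtain ⟨-, h2, -⟩ := hmin es.length (by omega)
    omega
  have h0m : ∀ h : 0 < m.length, s m[0] = v := by
    intro h
    have a := hm.1.src hmne
    rwa [List.head_eq_getElem] at a
  have h0es : ∀ h : 0 < es.length, s es[0] = v := by
    intro h
    have a := hc.1.src hesne
    rwa [List.head_eq_getElem] at a
  have hsrc : ∀ j (h1 : j < m.length) (h2 : j < es.length), j ≤ k → s m[j] = s es[j] := by
    intro j h1 h2 hjk
    cases j with
    | zero => rw [h0m (by omega), h0es (by omega)]
    | succ i =>
        obtain ⟨g1, g2, heq⟩ := hmin i (by omega)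
        rw [← chm i h1, ← ches i h2, heq]
  by_cases hck : k < m.length ∧ k < es.length
  · have hne' : m[k] ≠ es[k] := by
      intro h; exact hspec ⟨hck.1, hck.2, h⟩
    exact ⟨k, hck.2, m[k], hne', hsrc k hck.1 hck.2 le_rfl⟩
  · exfalso
    push_neg at hck
    rcases lt_or_eq_of_le hklem with h1 | h1
    · -- k < m.length, so k = es.length
      have hkes : k = es.length := by omega
      obtain ⟨j, rfl⟩ : ∃ j, k = j + 1 := by
        have := List.length_pos_iff.mpr hesne
        exact ⟨k - 1, by omega⟩
      have hlast := hc.1.rng hesne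
      rw [List.getLast_eq_getElem] at hlast
      simp only [show es.length - 1 = j from by omega] at hlast
      obtain ⟨g1, g2, heq⟩ := hmin j (by omega)
      have hv : s m[j+1] = v := by rw [← chm j h1, heq, hlast]
      exact hm.2 (j+1) (by omega) (by omega) hv
    · rcases lt_or_eq_of_le hkles with h2 | h2
      · -- k = m.length < es.length
        obtain ⟨j, rfl⟩ : ∃ j, k = j + 1 := by
          have := List.length_pos_iff.mpr hmne
          exact ⟨k - 1, by omega⟩
        have hlast := hm.1.rng hmne
        rw [List.getLast_eq_getElem] at hlast
        simp only [show m.length - 1 = j from by omega] at hlast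
        obtain ⟨g1, g2, heq⟩ := hmin j (by omega)
        have hv : s es[j+1] = v := by rw [← ches j h2, ← heq, hlast]
        have := hnodup (j+1) 0 h2 (by omega) (by rw [hv, h0es (by omega)])
        omega
      · apply hmes
        apply List.ext_getElem (by omega)
        intro i hi1 hi2
        obtain ⟨p1, p2, heq⟩ := hmin i (by omega)
        exact heq
end
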